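/- Let F be a finite field with Q elements and let s, d, t be positive integers with s > dt and s − dt ≤ Q. Suppose either s ≤ Q + 1, or Q is even, s − dt ∈ {3, Q − 1}, and s ≤ Q + 2. Then there exists a totally nonsingular matrix A ∈ F^{(s−dt) × dt}, all of whose entries are nonzero. -/

import Mathlib

/-!
A totally nonsingular `r × u` matrix comes from an arc: if among `r + u` vectors of `F^r` any `r`
are linearly independent, the coordinates of the last `u` vectors in the basis formed by the first
`r` form a totally nonsingular matrix. Indeed, a singular `k × k` minor yields a nonzero vector
lying both in the span of `k` of the last vectors and in the span of the `r - k` basis vectors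
outside the chosen rows, and these `r` vectors are independent.

The moment curve `a ↦ (1, a, …, a^(r-1))` with its point at infinity is an arc of `|F| + 1`
vectors, because a nonzero polynomial of degree `< r` has fewer than `r` roots. In
characteristic 2 the conic `a ↦ (1, a, a²)`, its point at infinity and the nucleus `(0, 1, 0)`
form an arc of `|F| + 2` vectors in `F³`, since squaring is injective; transposing covers
`3` columns instead of `3` rows.
-/

/-- A matrix is totally nonsingular if every square submatrix (given by injections
selecting rows and columns) is nonsingular. -/
def IsTotallyNonsingular {F : Type*} [Field F] {r u : ℕ}
    (A : Matrix (Fin r) (Fin u) F) : Prop :=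
  ∀ (k : ℕ), 1 ≤ k → ∀ (ρ : Fin k → Fin r) (σ : Fin k → Fin u),
    Function.Injective ρ → Function.Injective σ →
      (Matrix.of fun p q : Fin k => A (ρ p) (σ q)).det ≠ 0

section

open Finset Matrix Polynomial

variable {F : Type*} [Field F] {r u : ℕ}

theorem IsTotallyNonsingular.ne_zero {A : Matrix (Fin r) (Fin u) F}
    (hA : IsTotallyNonsingular A) (i : Fin r) (j : Fin u) : A i j ≠ 0 := by
  simpa using hA 1 le_rfl (fun _ => i) (fun _ => j)
    (Function.injective_of_subsingleton _) (Function.injective_of_subsingleton _)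

theorem IsTotallyNonsingular.transpose {A : Matrix (Fin r) (Fin u) F}
    (hA : IsTotallyNonsingular A) : IsTotallyNonsingular Aᵀ := by
  intro k hk ρ σ hρ hσ
  rw [← det_transpose]
  exact hA k hk σ ρ hσ hρ

variable (F r) in
def IsArc {ι V : Type*} [AddCommGroup V] [Module F V] (g : ι → V) : Prop :=
  ∀ s : Finset ι, #s = r → LinearIndepOn F g s

theorem IsArc.isTotallyNonsingular_repr {V : Type*} [AddCommGroup V] [Module F V]
    {g : Fin r ⊕ Fin u → V} (hg : IsArc F r g) (b : Module.Basis (Fin r) F V)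
    (hb : ∀ i, b i = g (.inl i)) :
    IsTotallyNonsingular (Matrix.of fun i j => b.repr (g (.inr j)) i) := by
  classical
  intro k _ ρ σ hρ hσ hdet
  obtain ⟨v, hv, hMv⟩ := exists_mulVec_eq_zero_iff.mpr hdet
  set x := ∑ q, v q • g (.inr (σ q))
  set S₁ : Finset (Fin r ⊕ Fin u) := univ.image (Sum.inr ∘ σ)
  set S₂ : Finset (Fin r ⊕ Fin u) := (univ.image ρ)ᶜ.image Sum.inl
  have hdisj : Disjoint (S₁ : Set (Fin r ⊕ Fin u)) S₂ := by
    rw [disjoint_coe]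
    simp [S₁, S₂, disjoint_left]
  have hkr : k ≤ r := by simpa using Fintype.card_le_of_injective ρ hρ
  have hcard : #(S₁ ∪ S₂) = r := by
    rw [card_union_of_disjoint (disjoint_coe.mp hdisj), card_image_of_injective _ Sum.inl_injective,
      card_image_of_injective _ (Sum.inr_injective.comp hσ), card_compl,
      card_image_of_injective _ hρ]
    simp only [card_univ, Fintype.card_fin]
    omega
  have hind := hg _ hcard
  rw [coe_union, linearIndepOn_union_iff hdisj] at hind
  obtain ⟨hind₁, -, hspan⟩ := hind
  have hx₁ : x ∈ Submodule.span F (g '' S₁) :=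
    Submodule.sum_mem _ fun q _ => Submodule.smul_mem _ _
      (Submodule.subset_span ⟨_, by simp [S₁], rfl⟩)
  have hx₂ : x ∈ Submodule.span F (g '' S₂) := by
    have : g '' S₂ = b '' ((univ.image ρ)ᶜ : Finset (Fin r)) := by
      simp [S₂, Set.image_image, hb]
    rw [this, Module.Basis.mem_span_image]
    intro i hi
    simp only [mem_coe, Finsupp.mem_support_iff] at hi
    simp only [coe_compl, coe_image, coe_univ, Set.image_univ, Set.mem_compl_iff, Set.mem_range]
    rintro ⟨p, rfl⟩
    apply hi
    simpa [x, mulVec, dotProduct, mul_comm] using congrFun hMv p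
  have hx : x = 0 := (Submodule.disjoint_def.mp hspan) x hx₁ hx₂
  have hli : LinearIndependent F (g ∘ Sum.inr ∘ σ) := by
    rw [← linearIndepOn_range_iff (Sum.inr_injective.comp hσ)]
    rwa [show Set.range (Sum.inr ∘ σ) = S₁ by simp [S₁]; rfl]
  exact hv (funext (Fintype.linearIndependent_iff.mp hli v hx))

theorem IsArc.comp_embedding {ι κ V : Type*} [AddCommGroup V] [Module F V] {g : ι → V}
    (hg : IsArc F r g) (e : κ ↪ ι) : IsArc F r (g ∘ e) := by
  intro s hs
  have hind := hg (s.map e) (by rwa [card_map])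
  rw [coe_map] at hind
  exact hind.comp_of_image e.injective.injOn

theorem IsArc.exists_isTotallyNonsingular {ι V : Type*} [Fintype ι] [AddCommGroup V]
    [Module F V] [FiniteDimensional F V] {g : ι → V} (hg : IsArc F r g)
    (hV : Module.finrank F V = r) (hcard : r + u ≤ Fintype.card ι) :
    ∃ A : Matrix (Fin r) (Fin u) F, IsTotallyNonsingular A := by
  obtain ⟨e⟩ : Nonempty (Fin r ⊕ Fin u ↪ ι) :=
    Function.Embedding.nonempty_of_card_le (by simpa using hcard)
  have he := hg.comp_embedding e
  have hli : LinearIndependent F ((g ∘ e) ∘ Sum.inl) := by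
    rw [← linearIndepOn_range_iff Sum.inl_injective]
    simpa using he (univ.map .inl) (by simp)
  let b := basisOfLinearIndependentOfCardEqFinrank' _ hli (by simp [hV])
  exact ⟨_, he.isTotallyNonsingular_repr b fun i => by simp [b]⟩

theorem isArc_of_dotProduct_eq_zero {ι : Type*} {g : ι → Fin r → F}
    (h : ∀ s : Finset ι, #s = r → ∀ c : Fin r → F, (∀ i ∈ s, c ⬝ᵥ g i = 0) → c = 0) :
    IsArc F r g := by
  intro s hs
  refine linearIndependent_of_top_le_span_of_card_eq_finrank ?_ (by simp [hs])
  by_contra hspan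
  obtain ⟨φ, hφ, hker⟩ := Submodule.exists_le_ker_of_lt_top _ (lt_top_iff_ne_top.mpr
    (mt top_le_iff.mpr hspan))
  set c : Fin r → F := fun p => φ (Pi.single p 1)
  have hφc (x : Fin r → F) : φ x = c ⬝ᵥ x := by
    conv_lhs => rw [← univ_sum_single x]
    simp only [dotProduct, map_sum]
    refine sum_congr rfl fun i _ => ?_
    rw [mul_comm, ← smul_eq_mul, ← map_smul, ← Pi.single_smul, smul_eq_mul, mul_one]
  have hc : c = 0 := h s hs c fun i hi => by
    rw [← hφc]
    exact hker (Submodule.subset_span ⟨⟨i, hi⟩, rfl⟩)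
  exact hφ (LinearMap.ext fun x => by simp [hφc, hc])

def momentCurve (n : ℕ) : Option F → Fin (n + 1) → F
  | none => Pi.single (Fin.last n) 1
  | some a => fun p => a ^ (p : ℕ)

theorem eq_zero_of_dotProduct_momentCurve_eq_zero {n : ℕ} {s : Finset (Option F)}
    (hs : #s = n + 1) {c : Fin (n + 1) → F} (hc : ∀ x ∈ s, c ⬝ᵥ momentCurve n x = 0) :
    c = 0 := by
  classical
  set P : F[X] := ∑ p : Fin (n + 1), C (c p) * X ^ (p : ℕ)
  have hcoeff (p : Fin (n + 1)) : P.coeff p = c p := by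
    simp [P, Fin.val_inj]
  have heval (a : F) : P.eval a = c ⬝ᵥ momentCurve n (some a) := by
    simp [P, eval_finsetSum, dotProduct, momentCurve]
  have hdeg : P.degree < #s.eraseNone := by
    by_cases hn : none ∈ s
    · rw [card_eraseNone_of_mem hn, hs, Nat.add_sub_cancel, degree_lt_iff_coeff_zero]
      intro m hm
      rcases hm.eq_or_lt with rfl | hlt
      · rw [← Fin.val_last n, hcoeff]
        simpa [momentCurve] using hc none hn
      · exact coeff_eq_zero_of_degree_lt ((degree_sum_fin_lt c).trans_le (by exact_mod_cast hlt))
    · rw [card_eraseNone_of_not_mem hn, hs]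
      exact degree_sum_fin_lt c
  have hP : P = 0 := eq_zero_of_degree_lt_of_eval_finset_eq_zero _ hdeg fun a ha => by
    rw [heval]
    exact hc _ (mem_eraseNone.mp ha)
  funext p
  rw [Pi.zero_apply, ← hcoeff, hP, coeff_zero]

theorem isArc_momentCurve (n : ℕ) : IsArc F (n + 1) (momentCurve (F := F) n) :=
  isArc_of_dotProduct_eq_zero fun _ hs _ hc => eq_zero_of_dotProduct_momentCurve_eq_zero hs hc

def hyperoval : Option (Option F) → Fin 3 → F
  | none => Pi.single 1 1
  | some x => momentCurve 2 x

theorem eq_zero_of_dotProduct_hyperoval_eq_zero [CharP F 2] {s : Finset (Option (Option F))}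
    (hs : #s = 3) {c : Fin 3 → F} (hc : ∀ x ∈ s, c ⬝ᵥ hyperoval x = 0) : c = 0 := by
  classical
  by_cases hn : none ∈ s
  · have hc₁ : c 1 = 0 := by simpa [hyperoval] using hc none hn
    have hsq : Function.Injective (Option.map fun a : F => a ^ 2) :=
      Option.map_injective (frobenius_inj F 2)
    -- with `c 1 = 0` the relation sees `a` only through `a ^ 2`, i.e. on the moment curve in `F²`
    have hdot (x : Option F) :
        c ⬝ᵥ momentCurve 2 x = ![c 0, c 2] ⬝ᵥ momentCurve 1 (x.map (· ^ 2)) := by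
      cases x <;> simp [momentCurve, dotProduct, Fin.sum_univ_three, hc₁]
    have hc' : ![c 0, c 2] = 0 := by
      refine eq_zero_of_dotProduct_momentCurve_eq_zero
        (s := s.eraseNone.image (Option.map (· ^ 2)))
        (by rw [card_image_of_injective _ hsq, card_eraseNone_of_mem hn, hs]) ?_
      simp only [mem_image, mem_eraseNone]
      rintro - ⟨x, hx, rfl⟩
      rw [← hdot]
      exact hc _ hx
    funext i
    fin_cases i
    exacts [congrFun hc' 0, hc₁, congrFun hc' 1]
  · exact eq_zero_of_dotProduct_momentCurve_eq_zero
      (by rw [card_eraseNone_of_not_mem hn, hs]) fun x hx => hc _ (mem_eraseNone.mp hx)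

theorem isArc_hyperoval [CharP F 2] : IsArc F 3 (hyperoval (F := F)) :=
  isArc_of_dotProduct_eq_zero fun _ hs _ hc => eq_zero_of_dotProduct_hyperoval_eq_zero hs hc

theorem exists_isTotallyNonsingular_of_add_le_card_add_one [Fintype F]
    (h : r + u ≤ Fintype.card F + 1) : ∃ A : Matrix (Fin r) (Fin u) F, IsTotallyNonsingular A := by
  cases r with
  | zero => exact ⟨0, fun k hk ρ => (ρ ⟨0, hk⟩).elim0⟩
  | succ n => exact (isArc_momentCurve n).exists_isTotallyNonsingular (by simp) (by simpa using h)

theorem exists_isTotallyNonsingular_three_of_charP_two [Fintype F] [CharP F 2]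
    (h : 3 + u ≤ Fintype.card F + 2) : ∃ A : Matrix (Fin 3) (Fin u) F, IsTotallyNonsingular A :=
  isArc_hyperoval.exists_isTotallyNonsingular (by simp) (by simpa using h)

end

theorem stmt_18_general {F : Type*} [Field F] [Fintype F] {Q s d t : ℕ}
    (hQ : Fintype.card F = Q)
    (hst : d * t < s)
    (hcond : s ≤ Q + 1 ∨
      (Even Q ∧ (s - d * t = 3 ∨ s - d * t = Q - 1) ∧ s ≤ Q + 2)) :
    ∃ A : Matrix (Fin (s - d * t)) (Fin (d * t)) F,
      IsTotallyNonsingular A ∧ ∀ i k, A i k ≠ 0 := by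
  suffices ∃ A : Matrix (Fin (s - d * t)) (Fin (d * t)) F, IsTotallyNonsingular A from
    this.imp fun A hA => ⟨hA, hA.ne_zero⟩
  subst hQ
  rcases hcond with hle | ⟨heven, hr, hle⟩
  · exact exists_isTotallyNonsingular_of_add_le_card_add_one (by omega)
  have : CharP F 2 :=
    ringChar.of_eq (FiniteField.even_card_iff_char_two.mpr (Nat.even_iff.mp heven))
  rcases hr with hr | hr
  · rw [hr]
    exact exists_isTotallyNonsingular_three_of_charP_two (by omega)
  by_cases hdt : d * t = 3
  · rw [hr, hdt]
    obtain ⟨A, hA⟩ :=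
      exists_isTotallyNonsingular_three_of_charP_two (F := F) (u := Fintype.card F - 1) (by omega)
    exact ⟨A.transpose, hA.transpose⟩
  · exact exists_isTotallyNonsingular_of_add_le_card_add_one (by omega)

/-- Let F be a finite field with Q elements and s, d, t positive
integers with s > dt and s − dt ≤ Q.  Suppose either s ≤ Q + 1, or Q is even,
s − dt ∈ {3, Q − 1}, and s ≤ Q + 2.  Then there exists a totally nonsingular matrix
A ∈ F^{(s−dt) × dt}, all of whose entries are nonzero. -/
theorem stmt_18 {F : Type*} [Field F] [Fintype F] {Q s d t : ℕ}
    (hQ : Fintype.card F = Q)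
    (hs : 0 < s) (hd : 0 < d) (ht : 0 < t) (hst : d * t < s)
    (hsdtQ : s - d * t ≤ Q)
    (hcond : s ≤ Q + 1 ∨
      (Even Q ∧ (s - d * t = 3 ∨ s - d * t = Q - 1) ∧ s ≤ Q + 2)) :
    ∃ A : Matrix (Fin (s - d * t)) (Fin (d * t)) F,
      IsTotallyNonsingular A ∧ ∀ i k, A i k ≠ 0 :=
  stmt_18_general hQ hst hcond
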